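/- Soundness of linear action transitions: let p be a composition, is ∈ locsof(p), and suppose p ⊨ vs →^{a,r} vs' (a linear action transition with wild-card location sequences vs, vs'), p ⇝ipred fs, p ⇝inv gs, p ⇝sa A, with vs ⊑ is. Define u = ⋀_i fs.i(is.i), n = ⋀_i gs.i(is.i), n' = ⋀_i gs.i((vs' ▷ is).i), and b ≡ (a ∈ A). Then there is a symbolic action transition p →^{a,b,u,n,n',r} p[vs' ▷ is]. -/

import Mathlib

/-! A formalization of the (untimed) CIF subset of the paper:
automata, parallel composition and the synchronizing-action operator,
with explicit, symbolic and linear SOS transition relations. -/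

abbrev Var := ℕ
abbrev Val := ℕ
abbrev Loc := ℕ
abbrev Act := ℕ
/-- Actions extended with the silent action τ (`none`). -/
abbrev ActTau := Option Act
abbrev Valu := Var → Val
/-- State predicates (initialization predicates, invariants, ...). -/
abbrev SPred := Valu → Prop
/-- Reset predicates: `r σ σ'` means `σ'⁺ ∪ σ ⊨ r`. -/
abbrev RPred := Valu → Valu → Prop

def SPred.and (P Q : SPred) : SPred := fun σ => P σ ∧ Q σ
def RPred.and (P Q : RPred) : RPred := fun σ σ' => P σ σ' ∧ Q σ σ'

/-- `x⁺ ∉ FV(r)`: the reset predicate `r` does not depend on the primed value of `x`. -/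
def plusFree (r : RPred) (x : Var) : Prop :=
  ∀ σ σ' v, r σ σ' ↔ r σ (Function.update σ' x v)

/-- Membership of a possibly-silent action in a set of actions (τ is never synchronizing). -/
def memTau (a : ActTau) (A : Set Act) : Prop :=
  match a with
  | some a' => a' ∈ A
  | none => False

structure Automaton where
  V : Set Loc
  init : Loc → SPred
  inv : Loc → SPred
  E : Set (Loc × ActTau × RPred × Loc)
  S : Set Act

/-- `α[v]`: replace the initial-predicate function by `ipred_v(w) ≜ (w ≡ v)`. -/
def Automaton.reinit (α : Automaton) (v : Loc) : Automaton :=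
  { α with init := fun w _ => w = v }

/-- CIF compositions: automata, parallel composition, synchronizing-action operator. -/
inductive Comp where
  | atom : Automaton → Comp
  | par : Comp → Comp → Comp
  | sync : Set Act → Comp → Comp

open Comp

/-- Explicit environment transitions `(p,σ) ⇝^A (p',σ')`. -/
inductive EnvStep : Comp → Valu → Set Act → Comp → Valu → Prop where
  | atom {α : Automaton} {v σ σ'} :
      v ∈ α.V → α.init v σ → α.inv v σ → α.inv v σ' →
      EnvStep (atom α) σ α.S (atom (α.reinit v)) σ'
  | par {p q p' q' σ σ' Ap Aq} :
      EnvStep p σ Ap p' σ' → EnvStep q σ Aq q' σ' →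
      EnvStep (par p q) σ (Ap ∪ Aq) (par p' q') σ'
  | sync {p p' σ σ' A A'} :
      EnvStep p σ A' p' σ' →
      EnvStep (sync A p) σ (A ∪ A') (sync A p') σ'

/-- Explicit action transitions `(p,σ) →^{a,b} (p',σ')`. -/
inductive ActStep : Comp → Valu → ActTau → Prop → Comp → Valu → Prop where
  | atom {α : Automaton} {v v' a r σ σ'} :
      (v, a, r, v') ∈ α.E → α.init v σ → α.inv v σ → α.inv v' σ' →
      r σ σ' → (∀ x, plusFree r x → σ x = σ' x) →
      ActStep (atom α) σ a (memTau a α.S) (atom (α.reinit v')) σ'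
  | syncPar {p q p' q' a σ σ'} :
      ActStep p σ a True p' σ' → ActStep q σ a True q' σ' →
      ActStep (par p q) σ a True (par p' q') σ'
  | interL {p q p' q' a b A σ σ'} :
      ActStep p σ a b p' σ' → EnvStep q σ A q' σ' → ¬ memTau a A →
      ActStep (par p q) σ a b (par p' q') σ'
  | interR {p q p' q' a b A σ σ'} :
      ActStep q σ a b q' σ' → EnvStep p σ A p' σ' → ¬ memTau a A →
      ActStep (par p q) σ a b (par p' q') σ'
  | sync {p p' a b A σ σ'} :
      ActStep p σ a b p' σ' →
      ActStep (sync A p) σ a (b ∨ memTau a A) (sync A p') σ'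

/-- Symbolic environment transitions `p ⇝^{u,n,A} p'`. -/
inductive SymEnv : Comp → SPred → SPred → Set Act → Comp → Prop where
  | atom {α : Automaton} {v} :
      v ∈ α.V →
      SymEnv (atom α) (α.init v) (α.inv v) α.S (atom (α.reinit v))
  | par {p q p' q' up uq np nq Ap Aq} :
      SymEnv p up np Ap p' → SymEnv q uq nq Aq q' →
      SymEnv (par p q) (up.and uq) (np.and nq) (Ap ∪ Aq) (par p' q')
  | sync {p p' u n A A'} :
      SymEnv p u n A' p' →
      SymEnv (sync A p) u n (A ∪ A') (sync A p')

/-- Symbolic action transitions `p →^{a,b,u,n,n',r} p'`. -/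
inductive SymAct : Comp → ActTau → Prop → SPred → SPred → SPred → RPred → Comp → Prop where
  | atom {α : Automaton} {v a r v'} :
      (v, a, r, v') ∈ α.E →
      SymAct (atom α) a (memTau a α.S) (α.init v) (α.inv v) (α.inv v') r
        (atom (α.reinit v'))
  | syncPar {p q p' q' a up uq np nq np' nq' rp rq} :
      SymAct p a True up np np' rp p' → SymAct q a True uq nq nq' rq q' →
      SymAct (par p q) a True (up.and uq) (np.and nq) (np'.and nq') (rp.and rq)
        (par p' q')
  | interL {p q p' q' a b up uq np nq np' r A} :
      SymAct p a b up np np' r p' → SymEnv q uq nq A q' → ¬ memTau a A →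
      SymAct (par p q) a b (up.and uq) (np.and nq) (np'.and nq) r (par p' q')
  | interR {p q p' q' a b up uq np nq nq' r A} :
      SymAct q a b uq nq nq' r q' → SymEnv p up np A p' → ¬ memTau a A →
      SymAct (par p q) a b (up.and uq) (np.and nq) (np.and nq') r (par p' q')
  | sync {p p' a b u n n' r A} :
      SymAct p a b u n n' r p' →
      SymAct (sync A p) a (b ∨ memTau a A) u n n' r (sync A p')

/-- Number of automata composed in parallel in a composition. -/
def nAut : Comp → ℕ
  | atom _ => 1
  | par p q => nAut p + nAut q
  | sync _ p => nAut p

/-- Initialization transitions `p ⇝ipred fs`. -/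
inductive IpredOf : Comp → List (Loc → SPred) → Prop where
  | atom (α : Automaton) : IpredOf (atom α) [α.init]
  | par {p q fp fq} : IpredOf p fp → IpredOf q fq → IpredOf (par p q) (fp ++ fq)
  | sync {p fs A} : IpredOf p fs → IpredOf (sync A p) fs

/-- Invariant transitions `p ⇝inv gs`. -/
inductive InvOf : Comp → List (Loc → SPred) → Prop where
  | atom (α : Automaton) : InvOf (atom α) [α.inv]
  | par {p q gp gq} : InvOf p gp → InvOf q gq → InvOf (par p q) (gp ++ gq)
  | sync {p gs A} : InvOf p gs → InvOf (sync A p) gs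

/-- Synchronizing-action transitions `p ⇝sa A`. -/
inductive SaOf : Comp → Set Act → Prop where
  | atom (α : Automaton) : SaOf (atom α) α.S
  | par {p q Ap Aq} : SaOf p Ap → SaOf q Aq → SaOf (par p q) (Ap ∪ Aq)
  | sync {p A A'} : SaOf p A' → SaOf (sync A p) (A ∪ A')

/-- Linear action transitions `p ⊨ vs →^{a,r} vs'`; `none` is the wild-card. -/
inductive LinAct : Comp → List (Option Loc) → ActTau → RPred → List (Option Loc) → Prop where
  | atom {α : Automaton} {v a r v'} :
      (v, a, r, v') ∈ α.E → LinAct (atom α) [some v] a r [some v']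
  | interL {p q vs vs' a r A} :
      LinAct p vs a r vs' → SaOf q A → ¬ memTau a A →
      LinAct (par p q) (vs ++ List.replicate (nAut q) none) a r
        (vs' ++ List.replicate (nAut q) none)
  | interR {p q vs vs' a r A} :
      LinAct q vs a r vs' → SaOf p A → ¬ memTau a A →
      LinAct (par p q) (List.replicate (nAut p) none ++ vs) a r
        (List.replicate (nAut p) none ++ vs')
  | syncPar {p q vsp vsq vsp' vsq' a rp rq Ap Aq} :
      LinAct p vsp a rp vsp' → LinAct q vsq a rq vsq' →
      SaOf p Ap → SaOf q Aq → memTau a Ap → memTau a Aq →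
      LinAct (par p q) (vsp ++ vsq) a (rp.and rq) (vsp' ++ vsq')
  | sync {p vs vs' a r A} :
      LinAct p vs a r vs' → LinAct (sync A p) vs a r vs'

/-- `locsof p`: sequences of locations, one per automaton of `p`. -/
def locsof : Comp → Set (List Loc)
  | atom α => {l | ∃ v ∈ α.V, l = [v]}
  | par p q => {l | ∃ lp ∈ locsof p, ∃ lq ∈ locsof q, l = lp ++ lq}
  | sync _ p => locsof p

/-- `p[is]`: re-initialize each automaton of `p` at the corresponding location. -/
def reinitC : Comp → List Loc → Comp
  | atom α, l => atom (α.reinit l.headI)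
  | par p q, l => par (reinitC p (l.take (nAut p))) (reinitC q (l.drop (nAut p)))
  | sync A p, l => sync A (reinitC p l)

/-- `⋀_{0 ≤ i < #fs} fs.i (is.i)` as a state predicate. -/
def bigAnd (fs : List (Loc → SPred)) (is : List Loc) : SPred :=
  fun σ => ∀ P ∈ List.zipWith (fun f v => f v) fs is, P σ

/-- Wild-card sub-sequence relation `vs ⊑ is`. -/
def subW : List (Option Loc) → List Loc → Prop
  | [], _ => True
  | x :: xs, y :: ys => (x = none ∨ x = some y) ∧ subW xs ys
  | _ :: _, [] => False

/-- Sequence overwriting `vs ▷ is`. -/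
def owW : List (Option Loc) → List Loc → List Loc
  | [], ys => ys
  | x :: xs, y :: ys => x.getD y :: owW xs ys
  | _ :: _, [] => []


/-! Induction on the linear transition. In a parallel composition the location sequence splits
at `nAut p` into the locations of the two components, and `bigAnd`, `owW`, `subW` and `reinitC`
all split along with it; a component that does not take part in the transition only sees
wild-cards, so its locations are unchanged and it contributes a symbolic environment transition. -/

lemma LinAct.length_eq {p vs a r vs'} (h : LinAct p vs a r vs') :
    vs.length = nAut p ∧ vs'.length = nAut p := by
  induction h <;> simp [nAut, *]

lemma length_of_mem_locsof {p : Comp} {is : List Loc} (h : is ∈ locsof p) :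
    is.length = nAut p := by
  induction p generalizing is with
  | atom α => obtain ⟨v, -, rfl⟩ := h; rfl
  | par p q ihp ihq =>
      obtain ⟨lp, hp, lq, hq, rfl⟩ := h
      simp [nAut, ihp hp, ihq hq]
  | sync A p ih => exact ih h

lemma IpredOf.length_eq {p fs} (h : IpredOf p fs) : fs.length = nAut p := by
  induction h <;> simp [nAut, *]

lemma InvOf.length_eq {p gs} (h : InvOf p gs) : gs.length = nAut p := by
  induction h <;> simp [nAut, *]

lemma SaOf.unique {p A A'} (h : SaOf p A) (h' : SaOf p A') : A = A' := by
  induction h generalizing A' with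
  | atom => cases h'; rfl
  | par _ _ ihp ihq => cases h' with | par hp hq => rw [ihp hp, ihq hq]
  | sync _ ih => cases h' with | sync h => rw [ih h]

lemma memTau_union {a : ActTau} {A B : Set Act} :
    memTau a (A ∪ B) ↔ memTau a A ∨ memTau a B := by
  cases a <;> simp [memTau]

lemma bigAnd_singleton (f : Loc → SPred) (v : Loc) : bigAnd [f] [v] = f v := by
  funext σ; simp [bigAnd]

lemma bigAnd_append {fs gs : List (Loc → SPred)} {xs ys : List Loc}
    (h : fs.length = xs.length) :
    bigAnd (fs ++ gs) (xs ++ ys) = (bigAnd fs xs).and (bigAnd gs ys) := by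
  funext σ
  simp [bigAnd, SPred.and, List.zipWith_append h, or_imp, forall_and]

lemma length_owW {xs : List (Option Loc)} {ys : List Loc} (h : xs.length ≤ ys.length) :
    (owW xs ys).length = ys.length := by
  induction xs generalizing ys with
  | nil => rfl
  | cons x xs ih =>
      cases ys with
      | nil => simp at h
      | cons y ys => simp [owW, ih (by simpa using h)]

lemma owW_append {xs xs' : List (Option Loc)} {ys ys' : List Loc}
    (h : xs.length = ys.length) :
    owW (xs ++ xs') (ys ++ ys') = owW xs ys ++ owW xs' ys' := by
  induction xs generalizing ys with
  | nil => cases ys <;> simp_all [owW]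
  | cons x xs ih =>
      cases ys with
      | nil => simp at h
      | cons y ys => simp_all [owW]

lemma owW_replicate_none (ys : List Loc) : owW (List.replicate ys.length none) ys = ys := by
  induction ys with
  | nil => rfl
  | cons y ys ih => simp [List.replicate, owW, ih]

lemma subW_append {xs xs' : List (Option Loc)} {ys ys' : List Loc}
    (h : xs.length = ys.length) (hs : subW (xs ++ xs') (ys ++ ys')) :
    subW xs ys ∧ subW xs' ys' := by
  induction xs generalizing ys with
  | nil => cases ys <;> simp_all [subW]
  | cons x xs ih =>
      cases ys with
      | nil => simp at h
      | cons y ys =>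
          obtain ⟨hxy, hs⟩ := hs
          exact ⟨⟨hxy, (ih (by simpa using h) hs).1⟩, (ih (by simpa using h) hs).2⟩

lemma reinitC_par_append {p q : Comp} {l l' : List Loc} (h : l.length = nAut p) :
    reinitC (par p q) (l ++ l') = par (reinitC p l) (reinitC q l') := by
  simp [reinitC, ← h]

lemma symEnv_reinitC {p : Comp} {is fs gs A} (h : is ∈ locsof p) (hf : IpredOf p fs)
    (hg : InvOf p gs) (hA : SaOf p A) :
    SymEnv p (bigAnd fs is) (bigAnd gs is) A (reinitC p is) := by
  induction p generalizing is fs gs A with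
  | atom α =>
      obtain ⟨v, hv, rfl⟩ := h
      cases hf; cases hg; cases hA
      rw [bigAnd_singleton, bigAnd_singleton]
      exact .atom hv
  | par p q ihp ihq =>
      obtain ⟨lp, hp, lq, hq, rfl⟩ := h
      cases hf with | par hfp hfq =>
      cases hg with | par hgp hgq =>
      cases hA with | par hAp hAq =>
      have hlp := length_of_mem_locsof hp
      rw [bigAnd_append (hfp.length_eq.trans hlp.symm),
        bigAnd_append (hgp.length_eq.trans hlp.symm), reinitC_par_append hlp]
      exact .par (ihp hp hfp hgp hAp) (ihq hq hfq hgq hAq)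
  | sync B p ih =>
      cases hf with | sync hf =>
      cases hg with | sync hg =>
      cases hA with | sync hA =>
      exact .sync (ih h hf hg hA)

lemma LinAct.symAct_reinitC {p vs a r vs'} (h : LinAct p vs a r vs') {is fs gs A}
    (his : is ∈ locsof p) (hf : IpredOf p fs) (hg : InvOf p gs) (hA : SaOf p A)
    (hsub : subW vs is) :
    SymAct p a (memTau a A) (bigAnd fs is) (bigAnd gs is) (bigAnd gs (owW vs' is)) r
      (reinitC p (owW vs' is)) := by
  induction h generalizing is fs gs A with
  | @atom α v a r v' he =>
      obtain ⟨w, -, rfl⟩ := his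
      cases hf; cases hg; cases hA
      obtain rfl : v = w := by simpa [subW] using hsub
      rw [show owW [some v'] [v] = [v'] from rfl, bigAnd_singleton, bigAnd_singleton,
        bigAnd_singleton]
      exact .atom he
  | @interL p q vsp vsp' a r Aq' hlin hAq' hna ih =>
      obtain ⟨lp, hp, lq, hq, rfl⟩ := his
      cases hf with | par hfp hfq =>
      cases hg with | par hgp hgq =>
      cases hA with | par hAp hAq =>
      obtain rfl := hAq'.unique hAq
      have hlp := length_of_mem_locsof hp
      have hvs' := hlin.length_eq.2.trans hlp.symm
      have hlp' : (owW vsp' lp).length = nAut p := (length_owW hvs'.le).trans hlp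
      rw [← length_of_mem_locsof hq] at hsub ⊢
      rw [owW_append hvs', owW_replicate_none, bigAnd_append (hfp.length_eq.trans hlp.symm),
        bigAnd_append (hgp.length_eq.trans hlp.symm), bigAnd_append (hgp.length_eq.trans hlp'.symm),
        reinitC_par_append hlp', memTau_union, or_iff_left hna]
      have hsubp := (subW_append (hlin.length_eq.1.trans hlp.symm) hsub).1
      exact .interL (ih hp hfp hgp hAp hsubp) (symEnv_reinitC hq hfq hgq hAq) hna
  | @interR p q vsq vsq' a r Ap' hlin hAp' hna ih =>
      obtain ⟨lp, hp, lq, hq, rfl⟩ := his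
      cases hf with | par hfp hfq =>
      cases hg with | par hgp hgq =>
      cases hA with | par hAp hAq =>
      obtain rfl := hAp'.unique hAp
      have hlp := length_of_mem_locsof hp
      rw [← hlp] at hsub ⊢
      rw [owW_append List.length_replicate, owW_replicate_none,
        bigAnd_append (hfp.length_eq.trans hlp.symm), bigAnd_append (hgp.length_eq.trans hlp.symm),
        bigAnd_append (hgp.length_eq.trans hlp.symm), reinitC_par_append hlp, memTau_union,
        or_iff_right hna]
      have hsubq := (subW_append List.length_replicate hsub).2
      exact .interR (ih hq hfq hgq hAq hsubq) (symEnv_reinitC hp hfp hgp hAp) hna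
  | @syncPar p q vsp vsq vsp' vsq' a rp rq Ap' Aq' hlinp hlinq hAp' hAq' hap haq ihp ihq =>
      obtain ⟨lp, hp, lq, hq, rfl⟩ := his
      cases hf with | par hfp hfq =>
      cases hg with | par hgp hgq =>
      cases hA with | par hAp hAq =>
      obtain rfl := hAp'.unique hAp
      obtain rfl := hAq'.unique hAq
      have hlp := length_of_mem_locsof hp
      have hvs' := hlinp.length_eq.2.trans hlp.symm
      have hlp' : (owW vsp' lp).length = nAut p := (length_owW hvs'.le).trans hlp
      obtain ⟨hsubp, hsubq⟩ := subW_append (hlinp.length_eq.1.trans hlp.symm) hsub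
      have ihp := ihp hp hfp hgp hAp hsubp
      have ihq := ihq hq hfq hgq hAq hsubq
      rw [eq_true hap] at ihp
      rw [eq_true haq] at ihq
      rw [owW_append hvs', bigAnd_append (hfp.length_eq.trans hlp.symm),
        bigAnd_append (hgp.length_eq.trans hlp.symm), bigAnd_append (hgp.length_eq.trans hlp'.symm),
        reinitC_par_append hlp', eq_true (memTau_union.2 (.inl hap))]
      exact .syncPar ihp ihq
  | sync _ ih =>
      cases hf with | sync hf =>
      cases hg with | sync hg =>
      cases hA with | sync hA =>
      rw [memTau_union, or_comm]
      exact .sync (ih his hf hg hA hsub)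

theorem soundness_of_linear_action_transitions
    (p : Comp) (vs vs' : List (Option Loc)) (a : ActTau) (r : RPred)
    (is : List Loc) (fs gs : List (Loc → SPred)) (A : Set Act)
    (u n n' : SPred) (b : Prop)
    (h1 : is ∈ locsof p)
    (h2 : LinAct p vs a r vs')
    (h2f : IpredOf p fs) (h2g : InvOf p gs) (h2A : SaOf p A)
    (h3u : u = bigAnd fs is) (h3n : n = bigAnd gs is)
    (h3n' : n' = bigAnd gs (owW vs' is))
    (h3sub : subW vs is) (h3b : b = memTau a A) :
    SymAct p a b u n n' r (reinitC p (owW vs' is)) := by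
  subst h3u h3n h3n' h3b
  exact h2.symAct_reinitC h1 h2f h2g h2A h3sub
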